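/- Let P ⊂ ℝ^d be finite, let x ∈ ℝ^d, let p ∈ P, and let γ be any piecewise-C¹ path from x to p. Then ℓ(γ) ≥ (1/2)·r_P(x)², where ℓ is the nearest-neighbor path length with respect to P. -/

import Mathlib

open scoped BigOperators
open MeasureTheory

noncomputable section

/-- Points of `ℝ^d`. -/
abbrev Pt (d : ℕ) : Type := EuclideanSpace ℝ (Fin d)

/-- The edge-squared metric on a point set `P ⊆ ℝ^d`: the infimum over finite chains of points
of `P` from `a` to `b` of the sum of squared Euclidean lengths of the steps. -/
noncomputable def edgeSq {d : ℕ} (P : Set (Pt d)) (a b : Pt d) : ℝ :=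
  sInf {c : ℝ | ∃ (k : ℕ) (p : Fin (k + 1) → Pt d), p 0 = a ∧ p (Fin.last k) = b ∧
    (∀ i, p i ∈ P) ∧ c = ∑ i : Fin k, ‖p i.succ - p i.castSucc‖ ^ 2}

/-- A path `γ : [0,1] → ℝ^d` is piecewise-C¹ if it is continuous on `[0,1]` and there is a
partition `0 = t₀ < t₁ < ⋯ < t_m = 1` such that `γ` is `C¹` on each subinterval. -/
def PiecewiseC1 {d : ℕ} (γ : ℝ → Pt d) : Prop :=
  ContinuousOn γ (Set.Icc 0 1) ∧
  ∃ (m : ℕ) (t : Fin (m + 1) → ℝ), StrictMono t ∧ t 0 = 0 ∧ t (Fin.last m) = 1 ∧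
    ∀ i : Fin m, ContDiffOn ℝ 1 γ (Set.Icc (t i.castSucc) (t i.succ))

/-- The nearest-neighbor length of a path: `ℓ(γ) = ∫₀¹ r_P(γ(t)) ‖γ'(t)‖ dt`, where
`r_P(z) = min_{x ∈ P} ‖x - z‖` is the distance to the nearest point of `P`. -/
noncomputable def nnLength {d : ℕ} (P : Set (Pt d)) (γ : ℝ → Pt d) : ℝ :=
  ∫ t in (0:ℝ)..1, Metric.infDist (γ t) P * ‖deriv γ t‖

/-- The nearest-neighbor geodesic distance:
`d_N(a,b) = 4 ⬝ inf { ℓ(γ) | γ piecewise-C¹ path from a to b }`. -/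
noncomputable def nnGeo {d : ℕ} (P : Set (Pt d)) (a b : Pt d) : ℝ :=
  4 * sInf {l : ℝ | ∃ γ : ℝ → Pt d, PiecewiseC1 γ ∧ γ 0 = a ∧ γ 1 = b ∧ l = nnLength P γ}

/-!
Write `r = r_P(x)` and `L(t) = ∫₀ᵗ ‖γ'‖` for the Euclidean arc length. Since `r_P` is
1-Lipschitz, `r_P(γ t) ≥ r - L(t)`, and since `r_P(γ 1) = 0` the arc length reaches `r` at some
time `τ`. Hence `ℓ(γ) ≥ ∫₀^τ (r - L) L' = r L(τ) - L(τ)² / 2 = r² / 2`. Piecewise-C¹ paths only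
enter through the fundamental theorem of calculus off the finite set of break points.
-/

open Set intervalIntegral

theorem Fin.exists_castSucc_le_lt_succ {α : Type*} [LinearOrder α] {m : ℕ} (t : Fin (m + 1) → α)
    {s : α} (h0 : t 0 ≤ s) (hs : s < t (Fin.last m)) :
    ∃ i : Fin m, t i.castSucc ≤ s ∧ s < t i.succ := by
  induction m with
  | zero => exact absurd (h0.trans_lt hs) (lt_irrefl _)
  | succ m ih =>
    by_cases h : s < t (Fin.last m).castSucc
    · obtain ⟨i, hi⟩ := ih (fun j => t j.castSucc) h0 h
      exact ⟨i.castSucc, hi⟩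
    · exact ⟨Fin.last m, not_lt.1 h, hs⟩

theorem ContDiffOn.integrableOn_deriv_Icc {E : Type*} [NormedAddCommGroup E] [NormedSpace ℝ E]
    {f : ℝ → E} {a b : ℝ} (hf : ContDiffOn ℝ 1 f (Icc a b)) :
    IntegrableOn (deriv f) (Icc a b) := by
  rw [integrableOn_Icc_iff_integrableOn_Ioo]
  rcases lt_or_ge a b with hab | hba
  · refine ((hf.continuousOn_derivWithin (uniqueDiffOn_Icc hab) le_rfl).integrableOn_Icc.mono_set
      Ioo_subset_Icc_self).congr_fun (fun s hs => ?_) measurableSet_Ioo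
    exact derivWithin_of_mem_nhds (Icc_mem_nhds hs.1 hs.2)
  · simp [Ioo_eq_empty_of_le hba]

namespace PiecewiseC1

variable {d : ℕ} {γ : ℝ → Pt d}

theorem exists_finite_contDiffAt (hγ : PiecewiseC1 γ) :
    ∃ T : Set ℝ, T.Finite ∧ ∀ s ∈ Ioo 0 1 \ T, ContDiffAt ℝ 1 γ s := by
  obtain ⟨-, m, t, -, ht0, ht1, hC⟩ := hγ
  refine ⟨range t, finite_range t, fun s ⟨hs, hsT⟩ => ?_⟩
  obtain ⟨i, hi, hiτ⟩ := Fin.exists_castSucc_le_lt_succ t (ht0 ▸ hs.1.le) (ht1 ▸ hs.2)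
  have hne : t i.castSucc ≠ s := fun h => hsT ⟨_, h⟩
  exact (hC i).contDiffAt (Icc_mem_nhds (lt_of_le_of_ne hi hne) hiτ)

theorem intervalIntegrable_deriv (hγ : PiecewiseC1 γ) :
    IntervalIntegrable (deriv γ) volume 0 1 := by
  obtain ⟨-, m, t, -, ht0, ht1, hC⟩ := hγ
  rw [intervalIntegrable_iff_integrableOn_Ico_of_le zero_le_one]
  refine (integrableOn_finite_iUnion.2 fun i => (hC i).integrableOn_deriv_Icc).mono_set ?_
  intro s hs
  obtain ⟨i, hi⟩ := Fin.exists_castSucc_le_lt_succ t (ht0 ▸ hs.1) (ht1 ▸ hs.2)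
  exact mem_iUnion.2 ⟨i, hi.1, hi.2.le⟩

end PiecewiseC1

section ArcLength

variable {E : Type*} [NormedAddCommGroup E] [NormedSpace ℝ E] [CompleteSpace E] {γ : ℝ → E}
  {a b : ℝ}

theorem norm_sub_le_integral_norm_deriv_of_off_countable (hab : a ≤ b)
    {T : Set ℝ} (hT : T.Countable) (hc : ContinuousOn γ (Icc a b))
    (hd : ∀ s ∈ Ioo a b \ T, DifferentiableAt ℝ γ s)
    (hi : IntervalIntegrable (deriv γ) volume a b) :
    ‖γ b - γ a‖ ≤ ∫ s in a..b, ‖deriv γ s‖ := by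
  rw [← integral_eq_of_hasDerivAt_off_countable_of_le γ _ hab hT hc
    (fun s hs => (hd s hs).hasDerivAt) hi]
  exact norm_integral_le_integral_norm hab

theorem hasDerivAt_integral_norm_deriv {s : ℝ} (hγ : ContDiffAt ℝ 1 γ s)
    (hi : IntervalIntegrable (deriv γ) volume a s) :
    HasDerivAt (fun τ => ∫ u in a..τ, ‖deriv γ u‖) ‖deriv γ s‖ s :=
  integral_hasDerivAt_right hi.norm
    (aestronglyMeasurable_deriv γ volume).norm.stronglyMeasurableAtFilter
    (hγ.derivWithin (m := 0) le_rfl).continuousAt.norm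

theorem LipschitzWith.sub_le_integral_norm_deriv {g : E → ℝ} {K : NNReal} (hg : LipschitzWith K g)
    (hab : a ≤ b) {T : Set ℝ} (hT : T.Countable) (hc : ContinuousOn γ (Icc a b))
    (hd : ∀ s ∈ Ioo a b \ T, DifferentiableAt ℝ γ s)
    (hi : IntervalIntegrable (deriv γ) volume a b) :
    g (γ a) - g (γ b) ≤ K * ∫ s in a..b, ‖deriv γ s‖ :=
  calc g (γ a) - g (γ b) ≤ K * ‖γ b - γ a‖ := by
        simpa [dist_eq_norm'] using (le_abs_self _).trans (hg.dist_le_mul (γ a) (γ b))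
    _ ≤ K * ∫ s in a..b, ‖deriv γ s‖ := by
        gcongr
        exact norm_sub_le_integral_norm_deriv_of_off_countable hab hT hc hd hi

theorem LipschitzWith.sq_div_two_le_integral_comp_mul_norm_deriv {g : E → ℝ}
    (hg : LipschitzWith 1 g) (hg0 : 0 ≤ g) (hab : a ≤ b) {T : Set ℝ} (hT : T.Countable)
    (hc : ContinuousOn γ (Icc a b))
    (hd : ∀ s ∈ Ioo a b \ T, ContDiffAt ℝ 1 γ s) (hi : IntervalIntegrable (deriv γ) volume a b)
    (hgb : g (γ b) = 0) :
    g (γ a) ^ 2 / 2 ≤ ∫ s in a..b, g (γ s) * ‖deriv γ s‖ := by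
  set r := g (γ a)
  set L : ℝ → ℝ := fun τ => ∫ u in a..τ, ‖deriv γ u‖
  have hsub : ∀ τ ∈ Icc a b, Icc a τ ⊆ Icc a b := fun τ hτ => Icc_subset_Icc_right hτ.2
  have hiτ : ∀ τ ∈ Icc a b, IntervalIntegrable (deriv γ) volume a τ := fun τ hτ =>
    hi.mono_set (uIcc_subset_uIcc_left (Icc_subset_uIcc hτ))
  have hdτ : ∀ τ ∈ Icc a b, ∀ s ∈ Ioo a τ \ T, ContDiffAt ℝ 1 γ s := fun τ hτ s hs =>
    hd s ⟨Ioo_subset_Ioo_right hτ.2 hs.1, hs.2⟩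
  have hLc : ContinuousOn L (Icc a b) := by
    simpa only [uIcc_of_le hab] using continuousOn_primitive_interval' hi.norm left_mem_uIcc
  have hr_le : ∀ s ∈ Icc a b, r - L s ≤ g (γ s) := fun s hs => by
    have := hg.sub_le_integral_norm_deriv hs.1 hT (hc.mono (hsub s hs))
      (fun u hu => (hdτ s hs u hu).differentiableAt one_ne_zero) (hiτ s hs)
    simp only [NNReal.coe_one, one_mul] at this
    linarith
  obtain ⟨τ, hτ, hLτ⟩ : ∃ τ ∈ Icc a b, L τ = r := by
    refine intermediate_value_Icc hab hLc ⟨?_, ?_⟩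
    · simpa [L] using hg0 (γ a)
    · simpa [hgb] using hr_le b (right_mem_Icc.2 hab)
  have hLcτ : ContinuousOn L (uIcc a τ) := uIcc_of_le hτ.1 ▸ hLc.mono (hsub τ hτ)
  have hmi : IntervalIntegrable (fun s => (r - L s) * ‖deriv γ s‖) volume a τ :=
    (hiτ τ hτ).norm.continuousOn_mul (continuousOn_const.sub hLcτ)
  have hgi : IntervalIntegrable (fun s => g (γ s) * ‖deriv γ s‖) volume a b :=
    hi.norm.continuousOn_mul (hg.continuous.comp_continuousOn (uIcc_of_le hab ▸ hc))
  have hprim : ∫ s in a..τ, (r - L s) * ‖deriv γ s‖ = r ^ 2 / 2 := by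
    rw [integral_eq_of_hasDerivAt_off_countable (fun s => r * L s - L s ^ 2 / 2) _ hT
      ((continuousOn_const.mul hLcτ).sub ((hLcτ.pow 2).div_const 2)) _ hmi]
    · rw [hLτ, show L a = 0 from integral_same]
      ring
    · intro s hs
      rw [min_eq_left hτ.1, max_eq_right hτ.1] at hs
      have hL := hasDerivAt_integral_norm_deriv (hdτ τ hτ s hs)
        (hiτ s ⟨hs.1.1.le, hs.1.2.le.trans hτ.2⟩)
      exact ((hL.const_mul r).sub ((hL.pow 2).div_const 2)).congr_deriv (by ring)
  calc r ^ 2 / 2 = ∫ s in a..τ, (r - L s) * ‖deriv γ s‖ := hprim.symm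
    _ ≤ ∫ s in a..τ, g (γ s) * ‖deriv γ s‖ :=
      integral_mono_on hτ.1 hmi (hgi.mono_set (uIcc_subset_uIcc_left (Icc_subset_uIcc hτ)))
        fun s hs => mul_le_mul_of_nonneg_right (hr_le s (hsub τ hτ hs)) (norm_nonneg _)
    _ ≤ ∫ s in a..b, g (γ s) * ‖deriv γ s‖ :=
      integral_mono_interval le_rfl hτ.1 hτ.2
        (ae_of_all _ fun s => mul_nonneg (hg0 _) (norm_nonneg _)) hgi

end ArcLength

theorem nnLength_ge_half_infDist_sq (d : ℕ) (P : Set (Pt d))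
    (x q : Pt d) (hq : q ∈ P) (γ : ℝ → Pt d) (hγ : PiecewiseC1 γ)
    (h0 : γ 0 = x) (h1 : γ 1 = q) :
    nnLength P γ ≥ (1 / 2) * Metric.infDist x P ^ 2 := by
  obtain ⟨T, hT, hγd⟩ := hγ.exists_finite_contDiffAt
  have hq0 : Metric.infDist (γ 1) P = 0 := h1 ▸ Metric.infDist_zero_of_mem hq
  have := (Metric.lipschitz_infDist_pt P).sq_div_two_le_integral_comp_mul_norm_deriv
    (fun _ => Metric.infDist_nonneg) zero_le_one hT.countable hγ.1 hγd
    hγ.intervalIntegrable_deriv hq0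
  rw [h0] at this
  unfold nnLength
  linarith
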